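/- arXiv:2202.02495 — 2 statements merged into one kernel-verified Lean document; each statement's English description precedes it below -/
import Mathlib

section
/- Let q ∈ [0,1) and let Z be a metric space. Two labeled graphs (G₁, ℓ_{G₁}) and (G₂, ℓ_{G₂}) with labels in Z are isomorphic as labeled graphs (i.e., there is a graph isomorphism ψ : V_{G₁} → V_{G₂} with ℓ_{G₁} = ℓ_{G₂} ∘ ψ) if and only if the induced labeled measure Markov chains (𝒳_q(G₁), ℓ_{G₁}) and (𝒳_q(G₂), ℓ_{G₂}) are isomorphic as LMMCs. -/
open scoped BigOperators NNReal

namespace WLGW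

variable {X Y W : Type*}

/-- A probability mass function on a finite type. -/
def IsPMF [Fintype X] (p : X → ℝ) : Prop :=
  (∀ x, 0 ≤ p x) ∧ ∑ x, p x = 1

/-- `γ` is a coupling of `p` and `q`. -/
def IsCoupling [Fintype X] [Fintype Y] (p : X → ℝ) (q : Y → ℝ) (γ : X → Y → ℝ) : Prop :=
  (∀ x y, 0 ≤ γ x y) ∧ (∀ x, ∑ y, γ x y = p x) ∧ (∀ y, ∑ x, γ x y = q y)

/-- `(m, μ)` is a measure Markov chain: each `m x` is a pmf, and `μ` is a fully supported
stationary pmf. -/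
def IsMMC [Fintype X] (m : X → X → ℝ) (μ : X → ℝ) : Prop :=
  (∀ x, IsPMF (m x)) ∧ IsPMF μ ∧ (∀ x, 0 < μ x) ∧ (∀ x', ∑ x, m x x' * μ x = μ x')

/-- `dX` is a metric on the finite type `X`. -/
def IsMetricOn [Fintype X] (dX : X → X → ℝ) : Prop :=
  (∀ x, dX x x = 0) ∧ (∀ x y, dX x y = dX y x) ∧ (∀ x y, x ≠ y → 0 < dX x y) ∧
    (∀ x y z, dX x z ≤ dX x y + dX y z)

/-- The iterated Weisfeiler–Lehman cost `D_k`. -/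
noncomputable def costIter [Fintype X] [Fintype Y] (mX : X → X → ℝ) (mY : Y → Y → ℝ)
    (D0 : X → Y → ℝ) : ℕ → X → Y → ℝ
  | 0 => D0
  | k + 1 => fun x y => sInf {r : ℝ | ∃ γ : X → Y → ℝ, IsCoupling (mX x) (mY y) γ ∧
      r = ∑ x', ∑ y', costIter mX mY D0 k x' y' * γ x' y'}

/-- The Weisfeiler–Lehman distance of depth `k` between two labeled measure Markov chains. -/
noncomputable def dWL {Z : Type*} [PseudoMetricSpace Z] [Fintype X] [Fintype Y]
    (mX : X → X → ℝ) (μX : X → ℝ) (ℓX : X → Z)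
    (mY : Y → Y → ℝ) (μY : Y → ℝ) (ℓY : Y → Z) (k : ℕ) : ℝ :=
  sInf {r : ℝ | ∃ γ : X → Y → ℝ, IsCoupling μX μY γ ∧
      r = ∑ x, ∑ y, costIter mX mY (fun x y => dist (ℓX x) (ℓY y)) k x y * γ x y}

/-- The absolute Weisfeiler–Lehman distance. -/
noncomputable def dWLsup {Z : Type*} [PseudoMetricSpace Z] [Fintype X] [Fintype Y]
    (mX : X → X → ℝ) (μX : X → ℝ) (ℓX : X → Z)
    (mY : Y → Y → ℝ) (μY : Y → ℝ) (ℓY : Y → Z) : ℝ :=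
  ⨆ k : ℕ, dWL mX μX ℓX mY μY ℓY k

/-- Isomorphism of labeled measure Markov chains. -/
def LMMCIso {Z : Type*} [Fintype X] [Fintype Y]
    (mX : X → X → ℝ) (μX : X → ℝ) (ℓX : X → Z)
    (mY : Y → Y → ℝ) (μY : Y → ℝ) (ℓY : Y → Z) : Prop :=
  ∃ ψ : X ≃ Y, (∀ x, ℓY (ψ x) = ℓX x) ∧ (∀ x x', mY (ψ x) (ψ x') = mX x x') ∧
    (∀ x, μY (ψ x) = μX x)

/-- The `q`-Markov kernel of a finite simple graph. -/
noncomputable def graphKernel {V : Type*} [Fintype V] [DecidableEq V] (G : SimpleGraph V) [DecidableRel G.Adj]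
    (q : ℝ) (v v' : V) : ℝ :=
  if G.degree v = 0 then (if v' = v then 1 else 0)
  else (if v' = v then q else 0) + (if G.Adj v v' then (1 - q) / (G.degree v : ℝ) else 0)

/-- The stationary degree measure of a finite simple graph. -/
noncomputable def graphMu {V : Type*} [Fintype V] (G : SimpleGraph V) [DecidableRel G.Adj]
    (v : V) : ℝ :=
  ((max (G.degree v) 1 : ℕ) : ℝ) / ∑ v', ((max (G.degree v') 1 : ℕ) : ℝ)

/-- The type of depth-`k` Weisfeiler–Lehman labels over an initial label set `Z`. -/
def WLType (Z : Type*) : ℕ → Type _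
  | 0 => Z
  | k + 1 => WLType Z k × Multiset (WLType Z k)

/-- The Weisfeiler–Lehman label hierarchy `ℓ^k` of a labeled graph. -/
def wlLabel {V Z : Type*} [Fintype V] (G : SimpleGraph V) [DecidableRel G.Adj] (ℓ : V → Z) :
    (k : ℕ) → V → WLType Z k
  | 0 => ℓ
  | k + 1 => fun v => (wlLabel G ℓ k v, (G.neighborFinset v).val.map (wlLabel G ℓ k))

/-- The multiset `L_k((G, ℓ))` of depth-`k` WL labels of all vertices. -/
def wlMultiset {V Z : Type*} [Fintype V] (G : SimpleGraph V) [DecidableRel G.Adj]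
    (ℓ : V → Z) (k : ℕ) : Multiset (WLType Z k) :=
  Finset.univ.val.map (wlLabel G ℓ k)

/-- The WL test distinguishes two labeled graphs. -/
def WLDistinguishes {V₁ V₂ Z : Type*} [Fintype V₁] [Fintype V₂]
    (G₁ : SimpleGraph V₁) [DecidableRel G₁.Adj] (ℓ₁ : V₁ → Z)
    (G₂ : SimpleGraph V₂) [DecidableRel G₂.Adj] (ℓ₂ : V₂ → Z) : Prop :=
  ∃ k, wlMultiset G₁ ℓ₁ k ≠ wlMultiset G₂ ℓ₂ k

/-- The relabeling `ℓ^g(v) = g(ℓ(v), deg v, |V|)`. -/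
def relabel {V Z Z₁ : Type*} [Fintype V] (G : SimpleGraph V) [DecidableRel G.Adj]
    (ℓ : V → Z) (g : Z × ℕ × ℕ → Z₁) : V → Z₁ :=
  fun v => g (ℓ v, G.degree v, Fintype.card V)

/-- `kpow m k = m^{⊗k}`, the `k`-step Markov kernel (`kpow m 0` is the identity kernel). -/
def kpow [Fintype X] [DecidableEq X] (m : X → X → ℝ) : ℕ → X → X → ℝ
  | 0 => fun x x' => if x' = x then 1 else 0
  | k + 1 => fun x x'' => ∑ x', kpow m k x' x'' * m x x'

/-- The Wasserstein distance between the pushforwards `(ℓX)_# p` and `(ℓY)_# q`, expressed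
through couplings of `p` and `q`. -/
noncomputable def wassersteinCost {Z : Type*} [PseudoMetricSpace Z] [Fintype X] [Fintype Y]
    (ℓX : X → Z) (ℓY : Y → Z) (p : X → ℝ) (q : Y → ℝ) : ℝ :=
  sInf {r : ℝ | ∃ γ : X → Y → ℝ, IsCoupling p q γ ∧
      r = ∑ x, ∑ y, dist (ℓX x) (ℓY y) * γ x y}

/-- The lower bound `d_WLLB^(k)` for the WL distance. -/
noncomputable def dWLLB {Z : Type*} [PseudoMetricSpace Z] [Fintype X] [Fintype Y]
    [DecidableEq X] [DecidableEq Y]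
    (mX : X → X → ℝ) (μX : X → ℝ) (ℓX : X → Z)
    (mY : Y → Y → ℝ) (μY : Y → ℝ) (ℓY : Y → Z) (k : ℕ) : ℝ :=
  sInf {r : ℝ | ∃ γ : X → Y → ℝ, IsCoupling μX μY γ ∧
      r = ∑ x, ∑ y, wassersteinCost ℓX ℓY (kpow mX k x) (kpow mY k y) * γ x y}

/-- Dimension sequence of an MCNN: `mcnnDim d dims 0 = d`, then `dims`. -/
def mcnnDim (d : ℕ) (dims : ℕ → ℕ) : ℕ → ℕ
  | 0 => d
  | i + 1 => dims i

/-- A `k`-layer Markov chain neural network on `ℝ^d`-LMMCs: Lipschitz maps `φ_1, …, φ_{k+1}`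
followed by a continuous map `ψ`. -/
structure MCNN (d k : ℕ) where
  dims : ℕ → ℕ
  φ : (i : ℕ) → EuclideanSpace ℝ (Fin (mcnnDim d dims i)) →
      EuclideanSpace ℝ (Fin (mcnnDim d dims (i + 1)))
  φ_lip : ∀ i, ∃ K : ℝ≥0, LipschitzWith K (φ i)
  ψ : EuclideanSpace ℝ (Fin (mcnnDim d dims (k + 1))) → ℝ
  ψ_cont : Continuous ψ

/-- Labels after `j` layers of an MCNN (the map `F_{φ_j} ∘ ⋯ ∘ F_{φ_1}`). -/
noncomputable def mcnnLabel {X : Type*} [Fintype X] {d k : ℕ} (N : MCNN d k)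
    (m : X → X → ℝ) (ℓ : X → EuclideanSpace ℝ (Fin d)) :
    (j : ℕ) → X → EuclideanSpace ℝ (Fin (mcnnDim d N.dims j))
  | 0 => ℓ
  | j + 1 => fun x => ∑ x', m x x' • N.φ j (mcnnLabel N m ℓ j x')

/-- Evaluation of an MCNN on an `ℝ^d`-LMMC: `ψ ∘ S_{φ_{k+1}} ∘ F_{φ_k} ∘ ⋯ ∘ F_{φ_1}`. -/
noncomputable def mcnnEval {X : Type*} [Fintype X] {d k : ℕ} (N : MCNN d k)
    (m : X → X → ℝ) (μ : X → ℝ) (ℓ : X → EuclideanSpace ℝ (Fin d)) : ℝ :=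
  N.ψ (∑ x, μ x • N.φ k (mcnnLabel N m ℓ k x))

/-- `k`-step couplings between the Markov kernels `mX` and `mY` (defined for `k ≥ 1`). -/
def IsStepCoupling [Fintype X] [Fintype Y] (mX : X → X → ℝ) (mY : Y → Y → ℝ) :
    ℕ → (X → Y → X → Y → ℝ) → Prop
  | 0, _ => False
  | 1, ν => ∀ x y, IsCoupling (mX x) (mY y) (ν x y)
  | k + 2, ν => ∃ νk ν1 : X → Y → X → Y → ℝ,
      IsStepCoupling mX mY (k + 1) νk ∧ (∀ x y, IsCoupling (mX x) (mY y) (ν1 x y)) ∧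
      ν = fun x y x' y' => ∑ x'', ∑ y'', νk x'' y'' x' y' * ν1 x y x'' y''

/-- The `k`-distortion `dis^(k)(γ, ν)`. -/
def disk [Fintype X] [Fintype Y] (dX : X → X → ℝ) (dY : Y → Y → ℝ)
    (γ : X → Y → ℝ) (ν : X → Y → X → Y → ℝ) : ℝ :=
  ∑ x, ∑ y, ∑ x'', ∑ y'', ∑ x', ∑ y',
    |dX x x' - dY y y'| * ν x'' y'' x' y' * γ x'' y'' * γ x y

/-- The `k`-Gromov–Wasserstein distance between Markov chain metric spaces. -/
noncomputable def dGWk [Fintype X] [Fintype Y]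
    (mX : X → X → ℝ) (dX : X → X → ℝ) (μX : X → ℝ)
    (mY : Y → Y → ℝ) (dY : Y → Y → ℝ) (μY : Y → ℝ) (k : ℕ) : ℝ :=
  sInf {r : ℝ | ∃ (γ : X → Y → ℝ) (ν : X → Y → X → Y → ℝ),
      IsCoupling μX μY γ ∧ IsStepCoupling mX mY k ν ∧ r = disk dX dY γ ν}

/-- The absolute Gromov–Wasserstein distance between MCMSs: `sup_{k ≥ 1} d_GW^(k)`. -/
noncomputable def dGWMCMS [Fintype X] [Fintype Y]
    (mX : X → X → ℝ) (dX : X → X → ℝ) (μX : X → ℝ)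
    (mY : Y → Y → ℝ) (dY : Y → Y → ℝ) (μY : Y → ℝ) : ℝ :=
  ⨆ k : ℕ, dGWk mX dX μX mY dY μY (k + 1)

/-- Isomorphism of Markov chain metric spaces. -/
def MCMSIso [Fintype X] [Fintype Y]
    (mX : X → X → ℝ) (dX : X → X → ℝ) (μX : X → ℝ)
    (mY : Y → Y → ℝ) (dY : Y → Y → ℝ) (μY : Y → ℝ) : Prop :=
  ∃ ψ : X ≃ Y, (∀ x x', dY (ψ x) (ψ x') = dX x x') ∧
    (∀ x x', mY (ψ x) (ψ x') = mX x x') ∧ (∀ x, μY (ψ x) = μX x)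

/-- The decoupled Gromov–Wasserstein distance between finite metric measure spaces. -/
noncomputable def dGWbi [Fintype X] [Fintype Y]
    (dX : X → X → ℝ) (μX : X → ℝ) (dY : Y → Y → ℝ) (μY : Y → ℝ) : ℝ :=
  sInf {r : ℝ | ∃ γ γ' : X → Y → ℝ, IsCoupling μX μY γ ∧ IsCoupling μX μY γ' ∧
      r = ∑ x, ∑ y, ∑ x', ∑ y', |dX x x' - dY y y'| * γ' x' y' * γ x y}

/-- `k`-step couplings between the measures `μX` and `μY`
(`k = 0` gives ordinary couplings). -/
def IsMeasureStepCoupling [Fintype X] [Fintype Y] (mX : X → X → ℝ) (mY : Y → Y → ℝ)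
    (μX : X → ℝ) (μY : Y → ℝ) : ℕ → (X → Y → ℝ) → Prop
  | 0, γ => IsCoupling μX μY γ
  | k + 1, γk => ∃ (γ : X → Y → ℝ) (ν : X → Y → X → Y → ℝ),
      IsCoupling μX μY γ ∧ IsStepCoupling mX mY (k + 1) ν ∧
      γk = fun x' y' => ∑ x, ∑ y, ν x y x' y' * γ x y

/-- The WWL label iteration. -/
noncomputable def wwlLabel {V : Type*} [Fintype V] {d : ℕ} (G : SimpleGraph V)
    [DecidableRel G.Adj] (ℓ : V → EuclideanSpace ℝ (Fin d)) :
    ℕ → V → EuclideanSpace ℝ (Fin d)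
  | 0 => ℓ
  | i + 1 => fun v => (1 / 2 : ℝ) •
      (wwlLabel G ℓ i v + ((G.degree v : ℝ))⁻¹ • ∑ v' ∈ G.neighborFinset v, wwlLabel G ℓ i v')

/-- The stacked WWL label `L^k_G = (ℓ^0, …, ℓ^k)`, valued in Euclidean `ℝ^{d(k+1)}`. -/
noncomputable def stackedLabel {V : Type*} [Fintype V] {d : ℕ} (G : SimpleGraph V)
    [DecidableRel G.Adj] (ℓ : V → EuclideanSpace ℝ (Fin d)) (k : ℕ) (v : V) :
    EuclideanSpace ℝ (Fin (k + 1) × Fin d) :=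
  WithLp.toLp 2 (fun p => wwlLabel G ℓ (p.1 : ℕ) v p.2)

/-! For `u ≠ v` the kernel `m^{G,q}_u(v)` is `(1 - q) / deg u` on neighbours and `0` otherwise, and
`q < 1` makes the former nonzero, so adjacency can be read off the kernel. Conversely, the kernel
and the degree measure are built from adjacency and degrees, which graph isomorphisms preserve. -/

section GraphMarkovChain

variable {V V₁ V₂ : Type*} [Fintype V] [Fintype V₁] [Fintype V₂]
  {G₁ : SimpleGraph V₁} [DecidableRel G₁.Adj] {G₂ : SimpleGraph V₂} [DecidableRel G₂.Adj]

theorem graphKernel_iso [DecidableEq V₁] [DecidableEq V₂] (e : G₁ ≃g G₂) (q : ℝ) (u v : V₁) :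
    graphKernel G₂ q (e u) (e v) = graphKernel G₁ q u v := by
  simp only [graphKernel, e.degree_eq, e.map_adj_iff, EmbeddingLike.apply_eq_iff_eq]

theorem graphMu_iso (e : G₁ ≃g G₂) (v : V₁) : graphMu G₂ (e v) = graphMu G₁ v := by
  simp only [graphMu, e.degree_eq]
  congr 1
  exact (Fintype.sum_equiv e.toEquiv _ _ fun w => by simp).symm

theorem graphKernel_of_ne [DecidableEq V] (G : SimpleGraph V) [DecidableRel G.Adj] (q : ℝ)
    {u v : V} (huv : u ≠ v) :
    graphKernel G q u v = if G.Adj u v then (1 - q) / G.degree u else 0 := by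
  by_cases hdeg : G.degree u = 0
  · have hnadj : ¬ G.Adj u v := fun h => (G.degree_eq_zero u).mp hdeg v h
    simp [graphKernel, hdeg, hnadj, huv.symm]
  · simp [graphKernel, hdeg, huv.symm]

theorem adj_iff_ne_and_graphKernel_ne_zero [DecidableEq V] (G : SimpleGraph V)
    [DecidableRel G.Adj] {q : ℝ} (hq : q < 1) (u v : V) :
    G.Adj u v ↔ u ≠ v ∧ graphKernel G q u v ≠ 0 := by
  by_cases huv : u = v
  · simp [huv]
  rw [graphKernel_of_ne G q huv]
  by_cases hadj : G.Adj u v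
  · have hdeg : (0 : ℝ) < G.degree u := by
      exact_mod_cast (G.degree_pos_iff_exists_adj u).mpr ⟨v, hadj⟩
    have hpos : 0 < (1 - q) / G.degree u := div_pos (by linarith) hdeg
    simp [hadj, huv, hpos.ne']
  · simp [hadj]

end GraphMarkovChain

theorem labeled_graph_iso_iff_lmmc_iso_general {V₁ V₂ Z : Type*} [Fintype V₁] [Fintype V₂]
    [DecidableEq V₁] [DecidableEq V₂]
    (G₁ : SimpleGraph V₁) [DecidableRel G₁.Adj] (G₂ : SimpleGraph V₂) [DecidableRel G₂.Adj]
    (ℓ₁ : V₁ → Z) (ℓ₂ : V₂ → Z) (q : ℝ) (hq1 : q < 1) :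
    (∃ ψ : V₁ ≃ V₂, (∀ u v, G₂.Adj (ψ u) (ψ v) ↔ G₁.Adj u v) ∧ (∀ v, ℓ₂ (ψ v) = ℓ₁ v)) ↔
      LMMCIso (graphKernel G₁ q) (graphMu G₁) ℓ₁ (graphKernel G₂ q) (graphMu G₂) ℓ₂ := by
  constructor
  · rintro ⟨ψ, hadj, hlabel⟩
    let e : G₁ ≃g G₂ := ⟨ψ, hadj _ _⟩
    exact ⟨ψ, hlabel, graphKernel_iso e q, graphMu_iso e⟩
  · rintro ⟨ψ, hlabel, hkernel, -⟩
    refine ⟨ψ, fun u v => ?_, hlabel⟩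
    rw [adj_iff_ne_and_graphKernel_ne_zero G₂ hq1, adj_iff_ne_and_graphKernel_ne_zero G₁ hq1,
      hkernel, ψ.injective.ne_iff]

theorem labeled_graph_iso_iff_lmmc_iso {V₁ V₂ Z : Type*} [Fintype V₁] [Fintype V₂]
    [DecidableEq V₁] [DecidableEq V₂] [MetricSpace Z]
    (G₁ : SimpleGraph V₁) [DecidableRel G₁.Adj] (G₂ : SimpleGraph V₂) [DecidableRel G₂.Adj]
    (ℓ₁ : V₁ → Z) (ℓ₂ : V₂ → Z) (q : ℝ) (hq0 : 0 ≤ q) (hq1 : q < 1) :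
    (∃ ψ : V₁ ≃ V₂, (∀ u v, G₂.Adj (ψ u) (ψ v) ↔ G₁.Adj u v) ∧ (∀ v, ℓ₂ (ψ v) = ℓ₁ v)) ↔
      LMMCIso (graphKernel G₁ q) (graphMu G₁) ℓ₁ (graphKernel G₂ q) (graphMu G₂) ℓ₂ :=
  labeled_graph_iso_iff_lmmc_iso_general G₁ G₂ ℓ₁ ℓ₂ q hq1

end WLGW
end

section
/- For every integer k ≥ 0 and all Z-LMMCs (𝒳, ℓ_X) and (𝒴, ℓ_Y), one has d_WL^(k)((𝒳,ℓ_X),(𝒴,ℓ_Y)) ≤ d_WL^(k+1)((𝒳,ℓ_X),(𝒴,ℓ_Y)). -/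
/-!
Both distances are optimal transport costs between `μX` and `μY`: with ground cost `D_k`
and with ground cost `D_{k+1}(x, y)`, the optimal transport cost of `D_k` between `m_x` and `m_y`.
Given a coupling `γ` of `μX, μY` and `ε`-optimal couplings `ν x y` of `m_x, m_y`, gluing them
gives a coupling of `μX mX, μY mY`, which is again a coupling of `μX, μY` by stationarity; its
`D_k`-cost is the `γ`-average of the `D_k`-costs of the `ν x y`, hence at most the
`D_{k+1}`-cost of `γ` plus `ε`.
-/

open scoped BigOperators NNReal

namespace WLGW

variable {X Y W : Type*}

open scoped Matrix

def couplingCosts [Fintype X] [Fintype Y] (c : X → Y → ℝ) (p : X → ℝ) (q : Y → ℝ) : Set ℝ :=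
  {r : ℝ | ∃ γ : X → Y → ℝ, IsCoupling p q γ ∧ r = ∑ x, ∑ y, c x y * γ x y}

noncomputable def transportCost [Fintype X] [Fintype Y] (c : X → Y → ℝ) (p : X → ℝ)
    (q : Y → ℝ) : ℝ :=
  sInf (couplingCosts c p q)

/-- The law of `(x', y')` when `(x, y)` is drawn from `γ` and then `(x', y')` from `ν x y`. -/
def couplingBind [Fintype X] [Fintype Y] (γ : X → Y → ℝ) (ν : X → Y → X → Y → ℝ) :
    X → Y → ℝ :=
  fun x' y' => ∑ x, ∑ y, ν x y x' y' * γ x y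

section Coupling

variable [Fintype X] [Fintype Y] {p : X → ℝ} {q : Y → ℝ} {γ : X → Y → ℝ}

lemma isCoupling_mul (hp : IsPMF p) (hq : IsPMF q) : IsCoupling p q (fun x y => p x * q y) := by
  refine ⟨fun x y => mul_nonneg (hp.1 x) (hq.1 y), fun x => ?_, fun y => ?_⟩
  · rw [← Finset.mul_sum, hq.2, mul_one]
  · rw [← Finset.sum_mul, hp.2, one_mul]

lemma IsCoupling.sum_sum_eq_one (hγ : IsCoupling p q γ) (hp : IsPMF p) :
    ∑ x, ∑ y, γ x y = 1 := by
  simp only [hγ.2.1, hp.2]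

lemma isCoupling_couplingBind {mX : X → X → ℝ} {mY : Y → Y → ℝ} {ν : X → Y → X → Y → ℝ}
    (hγ : IsCoupling p q γ) (hν : ∀ x y, IsCoupling (mX x) (mY y) (ν x y)) :
    IsCoupling (p ᵥ* mX) (q ᵥ* mY) (couplingBind γ ν) := by
  refine ⟨fun x' y' => Finset.sum_nonneg fun x _ => Finset.sum_nonneg fun y _ =>
      mul_nonneg ((hν x y).1 x' y') (hγ.1 x y), fun x' => ?_, fun y' => ?_⟩
  · calc ∑ y', couplingBind γ ν x' y' = ∑ x, ∑ y, (∑ y', ν x y x' y') * γ x y := by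
          simp only [couplingBind, Finset.sum_mul]
          rw [Finset.sum_comm]
          exact Finset.sum_congr rfl fun x _ => Finset.sum_comm
      _ = ∑ x, p x * mX x x' := Finset.sum_congr rfl fun x _ => by
          simp only [(hν x _).2.1]
          rw [← Finset.mul_sum, hγ.2.1, mul_comm]
  · calc ∑ x', couplingBind γ ν x' y' = ∑ x, ∑ y, (∑ x', ν x y x' y') * γ x y := by
          simp only [couplingBind, Finset.sum_mul]
          rw [Finset.sum_comm]
          exact Finset.sum_congr rfl fun x _ => Finset.sum_comm
      _ = ∑ y, q y * mY y y' := by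
          rw [Finset.sum_comm]
          refine Finset.sum_congr rfl fun y _ => ?_
          simp only [(hν _ y).2.2]
          rw [← Finset.mul_sum, hγ.2.2, mul_comm]

lemma sum_mul_couplingBind (c : X → Y → ℝ) (γ : X → Y → ℝ) (ν : X → Y → X → Y → ℝ) :
    ∑ x', ∑ y', c x' y' * couplingBind γ ν x' y' =
      ∑ x, ∑ y, (∑ x', ∑ y', c x' y' * ν x y x' y') * γ x y := by
  simp only [couplingBind, Finset.mul_sum, Finset.sum_mul, mul_assoc]
  refine (Finset.sum_congr rfl fun x' _ => Finset.sum_comm).trans ?_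
  refine Finset.sum_comm.trans (Finset.sum_congr rfl fun x _ => ?_)
  exact (Finset.sum_congr rfl fun x' _ => Finset.sum_comm).trans Finset.sum_comm

end Coupling

section TransportCost

variable [Fintype X] [Fintype Y] {c : X → Y → ℝ} {p : X → ℝ} {q : Y → ℝ}

lemma couplingCosts_nonempty (hp : IsPMF p) (hq : IsPMF q) : (couplingCosts c p q).Nonempty :=
  ⟨_, _, isCoupling_mul hp hq, rfl⟩

lemma couplingCosts_nonneg (hc : ∀ x y, 0 ≤ c x y) {r : ℝ} (hr : r ∈ couplingCosts c p q) :
    0 ≤ r := by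
  obtain ⟨γ, hγ, rfl⟩ := hr
  exact Finset.sum_nonneg fun x _ => Finset.sum_nonneg fun y _ => mul_nonneg (hc x y) (hγ.1 x y)

lemma transportCost_nonneg (hc : ∀ x y, 0 ≤ c x y) : 0 ≤ transportCost c p q :=
  Real.sInf_nonneg fun _ => couplingCosts_nonneg hc

lemma transportCost_le (hc : ∀ x y, 0 ≤ c x y) {γ : X → Y → ℝ} (hγ : IsCoupling p q γ) :
    transportCost c p q ≤ ∑ x, ∑ y, c x y * γ x y :=
  csInf_le ⟨0, fun _ => couplingCosts_nonneg hc⟩ ⟨γ, hγ, rfl⟩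

lemma le_transportCost (hp : IsPMF p) (hq : IsPMF q) {a : ℝ}
    (h : ∀ γ, IsCoupling p q γ → a ≤ ∑ x, ∑ y, c x y * γ x y) : a ≤ transportCost c p q := by
  refine le_csInf (couplingCosts_nonempty hp hq) ?_
  rintro r ⟨γ, hγ, rfl⟩
  exact h γ hγ

lemma exists_isCoupling_lt_transportCost_add (hp : IsPMF p) (hq : IsPMF q) {ε : ℝ}
    (hε : 0 < ε) :
    ∃ γ, IsCoupling p q γ ∧ ∑ x, ∑ y, c x y * γ x y < transportCost c p q + ε := by
  obtain ⟨_, ⟨γ, hγ, rfl⟩, hlt⟩ := Real.lt_sInf_add_pos (couplingCosts_nonempty hp hq) hε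
  exact ⟨γ, hγ, hlt⟩

theorem transportCost_vecMul_le (hc : ∀ x y, 0 ≤ c x y) {mX : X → X → ℝ} {mY : Y → Y → ℝ}
    (hmX : ∀ x, IsPMF (mX x)) (hmY : ∀ y, IsPMF (mY y)) (hp : IsPMF p) (hq : IsPMF q) :
    transportCost c (p ᵥ* mX) (q ᵥ* mY) ≤
      transportCost (fun x y => transportCost c (mX x) (mY y)) p q := by
  refine le_transportCost hp hq fun γ hγ => le_of_forall_pos_le_add fun ε hε => ?_
  choose ν hν hνlt using fun x y =>
    exists_isCoupling_lt_transportCost_add (c := c) (hmX x) (hmY y) hε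
  calc transportCost c (p ᵥ* mX) (q ᵥ* mY)
      ≤ ∑ x', ∑ y', c x' y' * couplingBind γ ν x' y' :=
        transportCost_le hc (isCoupling_couplingBind hγ hν)
    _ = ∑ x, ∑ y, (∑ x', ∑ y', c x' y' * ν x y x' y') * γ x y := sum_mul_couplingBind c γ ν
    _ ≤ ∑ x, ∑ y, (transportCost c (mX x) (mY y) + ε) * γ x y :=
        Finset.sum_le_sum fun x _ => Finset.sum_le_sum fun y _ =>
          mul_le_mul_of_nonneg_right (hνlt x y).le (hγ.1 x y)
    _ = ∑ x, ∑ y, transportCost c (mX x) (mY y) * γ x y + ε := by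
        simp only [add_mul, Finset.sum_add_distrib, ← Finset.mul_sum, hγ.sum_sum_eq_one hp,
          mul_one]

end TransportCost

lemma IsMMC.vecMul_eq [Fintype X] {m : X → X → ℝ} {μ : X → ℝ} (h : IsMMC m μ) :
    μ ᵥ* m = μ := by
  funext x'
  simp only [Matrix.vecMul, dotProduct, mul_comm (μ _)]
  exact h.2.2.2 x'

lemma costIter_nonneg [Fintype X] [Fintype Y] {mX : X → X → ℝ} {mY : Y → Y → ℝ}
    {D0 : X → Y → ℝ} (h0 : ∀ x y, 0 ≤ D0 x y) (k : ℕ) (x : X) (y : Y) :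
    0 ≤ costIter mX mY D0 k x y := by
  induction k generalizing x y with
  | zero => exact h0 x y
  | succ k ih => exact transportCost_nonneg ih

theorem dWL_mono {X Y Z : Type*} [Fintype X] [Fintype Y] [MetricSpace Z]
    (mX : X → X → ℝ) (μX : X → ℝ) (ℓX : X → Z)
    (mY : Y → Y → ℝ) (μY : Y → ℝ) (ℓY : Y → Z)
    (hX : IsMMC mX μX) (hY : IsMMC mY μY) (k : ℕ) :
    dWL mX μX ℓX mY μY ℓY k ≤ dWL mX μX ℓX mY μY ℓY (k + 1) := by
  set D := costIter mX mY (fun x y => dist (ℓX x) (ℓY y)) k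
  have hD : ∀ x y, 0 ≤ D x y := costIter_nonneg (fun _ _ => dist_nonneg) k
  calc dWL mX μX ℓX mY μY ℓY k = transportCost D μX μY := rfl
    _ = transportCost D (μX ᵥ* mX) (μY ᵥ* mY) := by
        rw [hX.vecMul_eq, hY.vecMul_eq]
    _ ≤ transportCost (fun x y => transportCost D (mX x) (mY y)) μX μY :=
        transportCost_vecMul_le hD hX.1 hY.1 hX.2.1 hY.2.1
    _ = dWL mX μX ℓX mY μY ℓY (k + 1) := rfl

end WLGW
end
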